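/- Let k be a positive integer and s ≥ 2 an even integer. Then ρ_{k,0}(2^s) = (Σ_{i=0}^{(s−4)/2} 2^{ki + (s−2i−3)(k−1)}) · (ρ_{k,0}(8) − 2^{2k−1}) + 2^{k(s−2)/2} · (ρ_{k,0}(4) − 2^k) + 2^{k·s/2}, where the sum is empty when s = 2. -/

import Mathlib

/-- `rho k lam n` is the number of `k`-tuples `(x₁,…,x_k) ∈ (ℤ/nℤ)^k` with
`x₁² + ⋯ + x_k² ≡ lam (mod n)`. -/
noncomputable def rho (k : ℕ) (lam : ℤ) (n : ℕ) : ℕ :=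
  Nat.card {x : Fin k → ZMod n // ∑ i, x i ^ 2 = (lam : ZMod n)}

/-!
Split the solutions modulo `2 ^ s` according to whether all coordinates are even. The even ones
are `2 u` with `∑ uᵢ² ≡ 0 (mod 2 ^ (s - 2))`, which gives `2 ^ k ρ(2 ^ (s - 2))`. For the
primitive ones (some coordinate odd), translating an odd coordinate `y` by `2 ^ (s - 2)` changes
`y²` by `2 ^ (s - 1)` modulo `2 ^ s` as soon as `s ≥ 4`. Hence exactly half of the `2 ^ k`-fold
lifts of the primitive solutions modulo `2 ^ (s - 1)` are solutions modulo `2 ^ s`, and the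
number of primitive solutions is multiplied by `2 ^ (k - 1)` at each step from `s = 3` on.
Unwinding both recursions along even `s`, with `ρ(4) - 2 ^ k` and `ρ(8) - 2 ^ (2k - 1)` the
primitive counts for `s = 2, 3`, gives the formula.
-/

open Finset

theorem AddMonoidHom.card_filter_comp {G H : Type*} [AddGroup G] [Fintype G] [AddGroup H]
    [Fintype H] [DecidableEq H] (f : G →+ H) (P : H → Prop) [DecidablePred P] :
    #{g | P (f g)} = #{g | f g = 0} * #{h | h ∈ Set.range f ∧ P h} := by
  classical
  rw [card_eq_sum_card_fiberwise (f := f) (t := {h | h ∈ Set.range f ∧ P h})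
    (fun g hg => by simpa using hg), sum_const_nat, mul_comm]
  rintro h hh
  simp only [mem_filter, mem_univ, true_and] at hh
  rw [filter_filter, ← AddMonoidHom.card_fiber_eq_of_mem_range f hh.1 ⟨0, map_zero f⟩]
  congr 1
  exact filter_congr fun g _ => ⟨And.right, fun e => ⟨e ▸ hh.2, e⟩⟩

namespace ZMod

theorem cast_cast {d m n : ℕ} (hd : d ∣ m) (hm : m ∣ n) (a : ZMod n) :
    (cast (cast a : ZMod m) : ZMod d) = cast a :=
  RingHom.congr_fun (castHom_comp hd hm) a

theorem cast_eq_zero_iff_natCast_dvd {m n : ℕ} [NeZero n] (h : m ∣ n) (a : ZMod n) :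
    (cast a : ZMod m) = 0 ↔ (m : ZMod n) ∣ a := by
  constructor
  · intro ha
    rw [← natCast_zmod_val a, cast_natCast h, natCast_eq_zero_iff] at ha
    obtain ⟨b, hb⟩ := ha
    exact ⟨b, by rw [← natCast_zmod_val a, hb, Nat.cast_mul]⟩
  · rintro ⟨b, rfl⟩
    rw [cast_mul h, cast_natCast h, natCast_self, zero_mul]

theorem natCast_mul_eq_zero_iff {d m n : ℕ} [NeZero n] (hn : n = d * m) (a : ZMod n) :
    (d : ZMod n) * a = 0 ↔ (cast a : ZMod m) = 0 := by
  have hd : d ≠ 0 := left_ne_zero_of_mul (hn ▸ NeZero.ne n)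
  rw [← natCast_zmod_val a, ← Nat.cast_mul, natCast_eq_zero_iff,
    cast_natCast ⟨d, hn.trans (mul_comm _ _)⟩, natCast_eq_zero_iff]
  generalize a.val = t
  rw [hn, Nat.mul_dvd_mul_iff_left (Nat.pos_of_ne_zero hd)]

theorem mul_eq_mul_of_cast_eq {m n : ℕ} [NeZero n] (hn : n = 2 * m) {a b : ZMod n}
    (hab : (cast a : ZMod 2) = cast b) : (m : ZMod n) * a = m * b := by
  have h2 : 2 ∣ n := ⟨m, hn⟩
  obtain ⟨c, hc⟩ :=
    (cast_eq_zero_iff_natCast_dvd h2 (a - b)).1 (by rw [cast_sub h2, hab, sub_self])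
  rw [← sub_eq_zero, ← mul_sub, hc, ← mul_assoc, ← Nat.cast_mul, mul_comm m, ← hn,
    natCast_self, zero_mul]

theorem cast_eq_zero_iff_eq_zero_or_eq {m n : ℕ} [NeZero n] (hn : n = 2 * m) (a : ZMod n) :
    (cast a : ZMod m) = 0 ↔ a = 0 ∨ a = m := by
  rw [cast_eq_zero_iff_natCast_dvd ⟨2, hn.trans (mul_comm _ _)⟩]
  constructor
  · rintro ⟨b, rfl⟩
    have hb : (cast b : ZMod 2) = cast (0 : ZMod n) ∨ (cast b : ZMod 2) = cast (1 : ZMod n) := by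
      rw [cast_zero, cast_one ⟨m, hn⟩]
      generalize (cast b : ZMod 2) = z
      revert z
      decide
    rcases hb with hb | hb
    · left
      rw [mul_eq_mul_of_cast_eq hn hb, mul_zero]
    · right
      rw [mul_eq_mul_of_cast_eq hn hb, mul_one]
  · rintro (rfl | rfl)
    exacts [dvd_zero _, dvd_rfl]

end ZMod

theorem cast_two_pow_eq_zero {n j : ℕ} (h2 : 2 ∣ n) (hj : j ≠ 0) :
    (ZMod.cast ((2 : ZMod n) ^ j) : ZMod 2) = 0 := by
  rw [← Nat.cast_ofNat (R := ZMod n), ← Nat.cast_pow, ZMod.cast_natCast h2,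
    ZMod.natCast_eq_zero_iff]
  exact dvd_pow_self 2 hj

section

variable {k : ℕ}

theorem card_filter_of_iff_cast {m n : ℕ} [NeZero m] [NeZero n] (h : m ∣ n)
    {Q : (Fin k → ZMod n) → Prop} [DecidablePred Q] {P : (Fin k → ZMod m) → Prop}
    [DecidablePred P] (hQ : ∀ x, Q x ↔ P fun i => ZMod.cast (x i)) :
    #{x | Q x} = (n / m) ^ k * #{y | P y} := by
  let f := (ZMod.castHom h (ZMod m)).toAddMonoidHom.compLeft (Fin k)
  have hf : Set.range f = Set.univ :=
    Set.range_eq_univ.2 (ZMod.castHom_surjective h).comp_left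
  have hker : n ^ k = #{x | f x = 0} * m ^ k := by
    simpa [hf] using f.card_filter_comp fun _ => True
  rw [Nat.div_pow h, hker, Nat.mul_div_cancel _ (pow_pos (Nat.pos_of_neZero m) k),
    filter_congr fun x _ => hQ x]
  have := f.card_filter_comp P
  simp only [hf, Set.mem_univ, true_and] at this
  exact this

theorem cast_sum_sq {m n : ℕ} (h : m ∣ n) (x : Fin k → ZMod n) :
    (ZMod.cast (∑ i, x i ^ 2) : ZMod m) = ∑ i, (ZMod.cast (x i) : ZMod m) ^ 2 := by
  have := map_sum (ZMod.castHom h (ZMod m)) (fun i => x i ^ 2) univ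
  simp only [map_pow, ZMod.castHom_apply] at this
  exact this

theorem sum_sq_add_single {ι R : Type*} [Fintype ι] [DecidableEq ι] [CommRing R] (x : ι → R)
    (j : ι) {c e : R} (h : (x j + c) ^ 2 = x j ^ 2 + e) :
    ∑ i, (x + Pi.single j c : ι → R) i ^ 2 = ∑ i, x i ^ 2 + e := by
  have hx : ∀ i,
      (x + Pi.single j c : ι → R) i ^ 2 = x i ^ 2 + Pi.single (M := fun _ => R) j e i := by
    intro i
    rcases eq_or_ne i j with rfl | hij
    · simpa using h
    · simp [hij]
  rw [sum_congr rfl fun i _ => hx i, sum_add_distrib, sum_pi_single', if_pos (mem_univ j)]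

def parity {n : ℕ} (x : Fin k → ZMod n) : Fin k → ZMod 2 := fun i => ZMod.cast (x i)

theorem parity_add {n : ℕ} (h2 : 2 ∣ n) (x y : Fin k → ZMod n) :
    parity (x + y) = parity x + parity y :=
  funext fun i => ZMod.cast_add h2 (x i) (y i)

theorem parity_single {n : ℕ} (j : Fin k) {c : ZMod n} (hc : (ZMod.cast c : ZMod 2) = 0) :
    parity (Pi.single j c) = 0 := by
  ext i
  rcases eq_or_ne i j with rfl | hij
  · simpa [parity] using hc
  · simp [parity, hij]

theorem parity_cast {m n : ℕ} (h2 : 2 ∣ m) (hm : m ∣ n) (x : Fin k → ZMod n) :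
    parity (fun i => (ZMod.cast (x i) : ZMod m)) = parity x :=
  funext fun i => ZMod.cast_cast h2 hm (x i)

theorem parity_eq_zero_iff {n : ℕ} [NeZero n] (h2 : 2 ∣ n) (x : Fin k → ZMod n) :
    parity x = 0 ↔ ∃ u, x = 2 * u := by
  simp only [funext_iff, parity, ZMod.cast_eq_zero_iff_natCast_dvd h2, Nat.cast_ofNat, Dvd.dvd,
    Pi.mul_apply, Pi.ofNat_apply]
  exact Classical.skolem

theorem card_filter_and_parity_ne_zero {n : ℕ} [NeZero n] (Q : (Fin k → ZMod n) → Prop)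
    [DecidablePred Q] :
    #{x | Q x ∧ parity x ≠ 0} = ∑ p ∈ {p | p ≠ 0}, #{x | Q x ∧ parity x = p} := by
  rw [card_eq_sum_card_fiberwise (f := parity) (t := {p | p ≠ 0})
    fun x hx => by simpa using (mem_filter.1 hx).2.2]
  refine sum_congr rfl fun p hp => ?_
  rw [filter_filter]
  congr 1
  refine filter_congr fun x _ => ⟨fun h => ⟨h.1.1, h.2⟩, fun h => ⟨⟨h.1, ?_⟩, h.2⟩⟩
  rw [h.2]
  simpa using hp

section Translation

variable {n : ℕ} [NeZero n] (h2 : 2 ∣ n) {c e : ZMod n} (hc : (ZMod.cast c : ZMod 2) = 0)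
  (hce : ∀ y : ZMod n, (ZMod.cast y : ZMod 2) ≠ 0 → (y + c) ^ 2 = y ^ 2 + e)
include h2 hc hce

theorem card_sum_sq_eq_and_parity_eq_add (a : ZMod n) {p : Fin k → ZMod 2} {j : Fin k}
    (hj : p j ≠ 0) :
    #{x : Fin k → ZMod n | ∑ i, x i ^ 2 = a ∧ parity x = p} =
      #{x : Fin k → ZMod n | ∑ i, x i ^ 2 = a + e ∧ parity x = p} := by
  refine card_equiv (Equiv.addRight (Pi.single j c)) fun x => ?_
  simp only [mem_filter, mem_univ, true_and, Equiv.coe_addRight, parity_add h2,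
    parity_single j hc, add_zero]
  refine and_congr_left fun hx => ?_
  have hxj : (ZMod.cast (x j) : ZMod 2) ≠ 0 := by rwa [← hx] at hj
  rw [sum_sq_add_single x j (hce _ hxj), add_left_inj]

-- Fibred over the parity pattern, an odd coordinate to translate can be fixed once and for all.
theorem card_sum_sq_eq_and_parity_ne_zero_add (a : ZMod n) :
    #{x : Fin k → ZMod n | ∑ i, x i ^ 2 = a ∧ parity x ≠ 0} =
      #{x : Fin k → ZMod n | ∑ i, x i ^ 2 = a + e ∧ parity x ≠ 0} := by
  simp_rw [card_filter_and_parity_ne_zero]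
  refine sum_congr rfl fun p hp => ?_
  obtain ⟨j, hj⟩ := Function.ne_iff.1 (mem_filter.1 hp).2
  exact card_sum_sq_eq_and_parity_eq_add h2 hc hce a hj

end Translation

theorem card_two_mul_eq_zero (s : ℕ) :
    #{u : Fin k → ZMod (2 ^ (s + 1)) | 2 * u = 0} = 2 ^ k := by
  rw [card_filter_of_iff_cast (m := 2 ^ s) (P := (· = 0)) (pow_dvd_pow 2 (Nat.le_add_right s 1))
    fun u => ?_, Nat.pow_div (Nat.le_add_right s 1) two_pos, Nat.add_sub_cancel_left, pow_one,
    filter_eq']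
  · simp
  simp only [funext_iff, Pi.mul_apply, Pi.ofNat_apply]
  exact forall_congr' fun i => by
    exact_mod_cast ZMod.natCast_mul_eq_zero_iff (d := 2) (pow_succ' 2 s) (u i)

theorem card_sum_sq_eq_zero_and_parity_eq_zero (s : ℕ) :
    #{x : Fin k → ZMod (2 ^ (s + 2)) | ∑ i, x i ^ 2 = 0 ∧ parity x = 0} =
      2 ^ k * #{y : Fin k → ZMod (2 ^ s) | ∑ i, y i ^ 2 = 0} := by
  let f := AddMonoidHom.mulLeft (2 : Fin k → ZMod (2 ^ (s + 2)))
  have hrange : ∀ y, y ∈ Set.range f ↔ parity y = 0 := fun y => by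
    rw [parity_eq_zero_iff (dvd_pow_self 2 (by omega)), Set.mem_range]
    exact ⟨fun ⟨u, hu⟩ => ⟨u, hu.symm⟩, fun ⟨u, hu⟩ => ⟨u, hu.symm⟩⟩
  have hker : #{u | f u = 0} = 2 ^ k := card_two_mul_eq_zero (s + 1)
  have hsol : #{u | ∑ i, f u i ^ 2 = 0} =
      4 ^ k * #{y : Fin k → ZMod (2 ^ s) | ∑ i, y i ^ 2 = 0} := by
    rw [card_filter_of_iff_cast (pow_dvd_pow 2 (Nat.le_add_right s 2))
      (P := fun y => ∑ i, y i ^ 2 = 0) fun u => ?_, Nat.pow_div (by omega) two_pos]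
    · norm_num
    have h4 : ∑ i, f u i ^ 2 = (4 : ℕ) * ∑ i, u i ^ 2 := by
      simp only [f, AddMonoidHom.coe_mulLeft, Pi.mul_apply, Pi.ofNat_apply, mul_sum]
      push_cast
      exact sum_congr rfl fun i _ => by ring
    rw [h4, ZMod.natCast_mul_eq_zero_iff (m := 2 ^ s) (by ring),
      cast_sum_sq (pow_dvd_pow 2 (Nat.le_add_right s 2))]
  have hcount := f.card_filter_comp fun y => ∑ i, y i ^ 2 = 0
  simp_rw [hsol, hker, hrange, and_comm] at hcount
  apply Nat.eq_of_mul_eq_mul_left (pow_pos two_pos k)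
  rw [← hcount, ← mul_assoc, ← mul_pow]
  norm_num

noncomputable def primitiveRho (k s : ℕ) : ℕ :=
  #{x : Fin k → ZMod (2 ^ s) | ∑ i, x i ^ 2 = 0 ∧ parity x ≠ 0}

theorem card_primitive_lifts {t : ℕ} (ht : t ≠ 0) :
    #{x : Fin k → ZMod (2 ^ (t + 1)) |
      (ZMod.cast (∑ i, x i ^ 2) : ZMod (2 ^ t)) = 0 ∧ parity x ≠ 0} =
      2 ^ k * primitiveRho k t := by
  have hm : 2 ^ t ∣ 2 ^ (t + 1) := pow_dvd_pow 2 (Nat.le_add_right t 1)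
  rw [primitiveRho, card_filter_of_iff_cast hm (P := fun y => ∑ i, y i ^ 2 = 0 ∧ parity y ≠ 0)
    fun x => ?_, Nat.pow_div (Nat.le_add_right t 1) two_pos, Nat.add_sub_cancel_left, pow_one]
  rw [cast_sum_sq hm, parity_cast (dvd_pow_self 2 ht) hm]

theorem card_primitive_lifts_eq_add (t : ℕ) :
    #{x : Fin k → ZMod (2 ^ (t + 1)) |
      (ZMod.cast (∑ i, x i ^ 2) : ZMod (2 ^ t)) = 0 ∧ parity x ≠ 0} =
      primitiveRho k (t + 1) +
        #{x : Fin k → ZMod (2 ^ (t + 1)) | ∑ i, x i ^ 2 = 2 ^ t ∧ parity x ≠ 0} := by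
  have hne : (2 : ZMod (2 ^ (t + 1))) ^ t ≠ 0 := by
    intro h
    have hdvd := (ZMod.natCast_eq_zero_iff (2 ^ t) (2 ^ (t + 1))).1 (by exact_mod_cast h)
    exact absurd ((Nat.pow_dvd_pow_iff_le_right one_lt_two).1 hdvd) (by omega)
  have hsplit : ∀ a : ZMod (2 ^ (t + 1)),
      (ZMod.cast a : ZMod (2 ^ t)) = 0 ↔ a = 0 ∨ a = 2 ^ t := fun a => by
    exact_mod_cast ZMod.cast_eq_zero_iff_eq_zero_or_eq (pow_succ' 2 t) a
  simp_rw [hsplit, or_and_right]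
  rw [filter_or, card_union_of_disjoint (disjoint_filter.2 fun x _ h0 h1 =>
    hne (h1.1.symm.trans h0.1)), primitiveRho]

theorem sq_add_two_pow_of_cast_ne_zero {t : ℕ} {y : ZMod (2 ^ (t + 4))}
    (hy : (ZMod.cast y : ZMod 2) ≠ 0) : (y + 2 ^ (t + 2)) ^ 2 = y ^ 2 + 2 ^ (t + 3) := by
  have hy1 : (2 : ZMod (2 ^ (t + 4))) ^ (t + 3) * y = 2 ^ (t + 3) * 1 := by
    have hy : (ZMod.cast y : ZMod 2) = ZMod.cast (1 : ZMod (2 ^ (t + 4))) := by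
      rw [ZMod.cast_one (dvd_pow_self 2 (by omega))]
      revert hy
      generalize (ZMod.cast y : ZMod 2) = z
      revert z
      decide
    exact_mod_cast ZMod.mul_eq_mul_of_cast_eq (pow_succ' 2 (t + 3)) hy
  have hzero : (2 : ZMod (2 ^ (t + 4))) ^ (t + 4) = 0 := by
    exact_mod_cast ZMod.natCast_self (2 ^ (t + 4))
  linear_combination hy1 + 2 ^ t * hzero

theorem two_mul_primitiveRho_add_four (t : ℕ) :
    2 * primitiveRho k (t + 4) = 2 ^ k * primitiveRho k (t + 3) := by
  have h2 : 2 ∣ 2 ^ (t + 4) := dvd_pow_self 2 (by omega)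
  have hshift := card_sum_sq_eq_and_parity_ne_zero_add (k := k) h2
    (cast_two_pow_eq_zero h2 (by omega : t + 2 ≠ 0)) (fun _ => sq_add_two_pow_of_cast_ne_zero) 0
  rw [zero_add, ← primitiveRho] at hshift
  rw [two_mul, ← card_primitive_lifts (t := t + 3) (by omega), card_primitive_lifts_eq_add,
    hshift]
theorem rho_zero_eq_card (n : ℕ) [NeZero n] :
    rho k 0 n = #{x : Fin k → ZMod n | ∑ i, x i ^ 2 = 0} := by
  simp [rho, Nat.card_eq_fintype_card, Fintype.card_subtype]

theorem rho_zero_one : rho k 0 1 = 1 := by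
  rw [rho_zero_eq_card, filter_true_of_mem fun x _ => Subsingleton.elim _ _]
  simp

theorem rho_zero_two (hk : 0 < k) : rho k 0 2 = 2 ^ (k - 1) := by
  let f := AddMonoidHom.mk' (fun x : Fin k → ZMod 2 => ∑ i, x i) fun x y => sum_add_distrib
  have hf : Set.range f = Set.univ := Set.range_eq_univ.2 fun a =>
    ⟨Pi.single ⟨0, hk⟩ a, by simp [f]⟩
  have hcount := f.card_filter_comp fun _ => True
  simp only [hf, Set.mem_univ, filter_true, card_univ, Fintype.card_fun, ZMod.card,
    Fintype.card_fin, and_self] at hcount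
  rw [rho_zero_eq_card,
    filter_congr fun x _ => by rw [sum_congr rfl fun i _ => ZMod.pow_card (x i)]]
  apply Nat.eq_of_mul_eq_mul_right two_pos
  rw [← pow_succ, Nat.sub_add_cancel hk, hcount]
  rfl

theorem rho_zero_two_pow_add_two (s : ℕ) :
    rho k 0 (2 ^ (s + 2)) = 2 ^ k * rho k 0 (2 ^ s) + primitiveRho k (s + 2) := by
  rw [rho_zero_eq_card, rho_zero_eq_card, ← card_sum_sq_eq_zero_and_parity_eq_zero, primitiveRho,
    ← filter_filter, ← filter_filter, card_filter_add_card_filter_not]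

theorem primitiveRho_add_three (hk : 0 < k) (t : ℕ) :
    primitiveRho k (t + 3) = 2 ^ (t * (k - 1)) * primitiveRho k 3 := by
  induction t with
  | zero => simp
  | succ t ih =>
    apply Nat.eq_of_mul_eq_mul_left two_pos
    rw [show t + 1 + 3 = t + 4 by omega, two_mul_primitiveRho_add_four, ih, ← mul_assoc,
      ← mul_assoc, ← pow_succ', ← pow_add]
    congr 2
    rw [Nat.succ_mul]
    omega

theorem rho_zero_two_pow_two_mul_add_two (hk : 0 < k) (j : ℕ) :
    rho k 0 (2 ^ (2 * j + 2)) =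
      (∑ i ∈ range j, 2 ^ (k * i + (2 * j + 2 - 2 * i - 3) * (k - 1))) * primitiveRho k 3
        + 2 ^ (k * j) * primitiveRho k 2 + 2 ^ (k * (j + 1)) := by
  induction j with
  | zero =>
    rw [rho_zero_two_pow_add_two 0, pow_zero, rho_zero_one]
    simp [add_comm]
  | succ j ih =>
    have hsum : ∑ i ∈ range (j + 1), 2 ^ (k * i + (2 * (j + 1) + 2 - 2 * i - 3) * (k - 1)) =
        2 ^ k * ∑ i ∈ range j, 2 ^ (k * i + (2 * j + 2 - 2 * i - 3) * (k - 1))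
          + 2 ^ ((2 * j + 1) * (k - 1)) := by
      rw [sum_range_succ', mul_sum]
      congr 1
      · refine sum_congr rfl fun i _ => ?_
        rw [← pow_add, show 2 * (j + 1) + 2 - 2 * (i + 1) - 3 = 2 * j + 2 - 2 * i - 3 by omega]
        ring_nf
      · rw [mul_zero, zero_add, show 2 * (j + 1) + 2 - 2 * 0 - 3 = 2 * j + 1 by omega]
    rw [hsum, show 2 * (j + 1) + 2 = (2 * j + 1) + 3 by ring, rho_zero_two_pow_add_two,
      primitiveRho_add_three hk, ih]
    ring

end

/-- For even `s ≥ 2`: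
`ρ_{k,0}(2^s) = (Σ_{i=0}^{(s−4)/2} 2^{ki+(s−2i−3)(k−1)}) · (ρ_{k,0}(8) − 2^{2k−1})
+ 2^{k(s−2)/2} · (ρ_{k,0}(4) − 2^k) + 2^{ks/2}` (the sum is empty when `s = 2`). -/
theorem rho_zero_two_pow_s_even (k : ℕ) (hk : 0 < k) (s : ℕ) (hs : 2 ≤ s) (hse : Even s) :
    rho k 0 (2 ^ s) =
      (∑ i ∈ Finset.range ((s - 2) / 2), 2 ^ (k * i + (s - 2 * i - 3) * (k - 1))) *
        (rho k 0 8 - 2 ^ (2 * k - 1))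
      + 2 ^ (k * ((s - 2) / 2)) * (rho k 0 4 - 2 ^ k)
      + 2 ^ (k * (s / 2)) := by
  obtain ⟨j, rfl⟩ : ∃ j, s = 2 * j + 2 := by
    obtain ⟨r, hr⟩ := hse
    exact ⟨r - 1, by omega⟩
  have h8 : rho k 0 8 - 2 ^ (2 * k - 1) = primitiveRho k 3 := by
    rw [show 8 = 2 ^ (1 + 2) by norm_num, rho_zero_two_pow_add_two, pow_one, rho_zero_two hk,
      ← pow_add, show k + (k - 1) = 2 * k - 1 by omega, Nat.add_sub_cancel_left]
  have h4 : rho k 0 4 - 2 ^ k = primitiveRho k 2 := by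
    rw [show 4 = 2 ^ (0 + 2) by norm_num, rho_zero_two_pow_add_two, pow_zero, rho_zero_one,
      mul_one, Nat.add_sub_cancel_left]
  rw [rho_zero_two_pow_two_mul_add_two hk, h8, h4, show (2 * j + 2 - 2) / 2 = j by omega,
    show (2 * j + 2) / 2 = j + 1 by omega]
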